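/- The boundary operator ∂_K on the oriented cellular chain complex of the associahedron, defined by ∂_K(T, e_1∧...∧e_m) = Σ_{T': T'/e' = T} (T', e'∧e_1∧...∧e_m) where the sum is over trees T' with an internal edge e' whose collapse yields T, satisfies ∂_K ∘ ∂_K = 0. -/

import Mathlib

/-- Planar rooted trees (children are ordered, so the trees are planar). -/
inductive PTree : Type
  | leaf : PTree
  | node : List PTree → PTree

namespace PTree

/- The number of leaves. -/
mutual
  def leaves : PTree → ℕ
    | .leaf => 1
    | .node cs => leavesList cs
  def leavesList : List PTree → ℕ
    | [] => 0
    | t :: ts => leaves t + leavesList ts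
end

/- The number of internal edges of a subtree, *including* its root edge
(which is internal once the subtree is hung below some vertex). -/
mutual
  def iesub : PTree → ℕ
    | .leaf => 0
    | .node cs => 1 + iesubList cs
  def iesubList : List PTree → ℕ
    | [] => 0
    | t :: ts => iesub t + iesubList ts
end

/-- The number of internal edges of a planar rooted tree: edges not adjacent
to a leaf and different from the root edge. -/
def iEdges : PTree → ℕ
  | .leaf => 0
  | .node cs => iesubList cs

/- The list of arities (numbers of children) of the internal vertices,
in preorder. -/
mutual
  def arities : PTree → List ℕ
    | .leaf => []
    | .node cs => cs.length :: aritiesList cs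
  def aritiesList : List PTree → List ℕ
    | [] => []
    | t :: ts => arities t ++ aritiesList ts
end

/-- Every internal vertex has at least `2` children. -/
def reduced (T : PTree) : Prop := ∀ r ∈ arities T, 2 ≤ r

/-- Every internal vertex has exactly `2` children, i.e. the tree is binary. -/
def isBin (T : PTree) : Prop := ∀ r ∈ arities T, r = 2

end PTree

namespace PTree

/- `contract T i` collapses the `i`-th internal edge of `T` (0-indexed in
the canonical preorder, i.e. depth-first left-to-right, ordering of the
internal edges): the vertex below the collapsed edge is merged into the
vertex above it. -/
mutual
  def csub : ℕ → PTree → List PTree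
    | _, .leaf => [.leaf]
    | i, .node cs => if i = 0 then cs else [.node (clist (i - 1) cs)]
  def clist : ℕ → List PTree → List PTree
    | _, [] => []
    | i, t :: ts =>
        if i < iesub t then csub i t ++ ts else t :: clist (i - iesub t) ts
end

def contract : PTree → ℕ → PTree
  | .leaf, _ => .leaf
  | .node cs, i => .node (clist i cs)

end PTree

/-- Cellular chains of the associahedra: since for every `n` there are only
finitely many planar rooted trees with `n` leaves, the chain module is the
module of integer-valued functions on the set of trees, each tree being
taken with its canonical orientation (the preorder ordering of its internal
edges).  An oriented cell `(T, ω)` is identified with `±1` times the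
corresponding basis (delta) function, the sign being the parity of `ω`
relative to the canonical ordering; this realizes the relation
`(T, ω) = -(T, ω')` for opposite orientations. -/
abbrev KChains : Type := PTree → ℤ

open PTree in
/-- The boundary operator `∂_K(T, e_1 ∧ ... ∧ e_m) = ∑_{T' : T'/e' = T}
(T', e' ∧ e_1 ∧ ... ∧ e_m)`, summing over all one-edge expansions `(T', e')`
of `T`, expressed in the canonical basis by its matrix coefficients: the
coefficient of `∂_K f` at a tree `T'` picks up, for every internal edge `e'`
of `T'`, the coefficient of `f` at `T'/e'`, with the sign `(-1)^{pos(e')}`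
converting the orientation `e' ∧ (canonical ordering of T'/e')` to the
canonical ordering of `T'`. -/
noncomputable def bndK (f : KChains) : KChains := fun T' =>
  ∑ i ∈ Finset.range (iEdges T'), ((-1 : ℤ)) ^ i * f (contract T' i)

/-!
Label the internal edges of a tree by their preorder positions. Collapsing two distinct edges in
either order gives the same tree, but the label of the later edge drops by one once the earlier
one is gone: `(T / j) / i = (T / i) / (j - 1)` for `i < j`, exactly the simplicial identity
`d_i d_j = d_{j-1} d_i`. As for the alternating face maps of a simplicial object, the terms of
`∂_K (∂_K f)` at a tree then cancel in pairs with opposite signs.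
-/

open Finset

theorem sum_range_alternating_double_eq_zero {M : Type*} [AddCommGroup M] {n : ℕ}
    (g : ℕ → ℕ → M) (hg : ∀ i j, i < j → j < n → g j i = g i (j - 1)) :
    ∑ i ∈ range n, ∑ k ∈ range (n - 1), (-1 : ℤ) ^ (i + k) • g i k = 0 := by
  have neg_one_pow_succ_smul (a : ℕ) (x : M) :
      (-1 : ℤ) ^ (a + 1) • x = -((-1 : ℤ) ^ a • x) := by
    rw [pow_succ, mul_neg_one, neg_smul]
  rw [← sum_product']
  refine sum_involution (fun p _ => if p.2 < p.1 then (p.2, p.1 - 1) else (p.2 + 1, p.1))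
    ?cancel ?ne ?mem ?invol
  case cancel =>
    rintro ⟨i, k⟩ hp
    simp only [mem_product, mem_range] at hp
    by_cases hki : k < i
    · simp only [hki, ite_true, ← hg k i hki hp.1, show i + k = k + (i - 1) + 1 by omega,
        neg_one_pow_succ_smul, neg_add_cancel]
    · simp only [hki, ite_false, hg i (k + 1) (by omega) (by omega), add_tsub_cancel_right,
        show k + 1 + i = i + k + 1 by omega, neg_one_pow_succ_smul, add_neg_cancel]
  case ne =>
    rintro ⟨i, k⟩ - -
    split_ifs <;> simp only [ne_eq, Prod.mk.injEq] <;> omega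
  case mem =>
    rintro ⟨i, k⟩ hp
    simp only [mem_product, mem_range] at hp
    split_ifs <;> simp only [mem_product, mem_range] <;> omega
  case invol =>
    rintro ⟨i, k⟩ -
    by_cases hki : k < i
    · simp only [hki, ite_true, show ¬ i - 1 < k by omega, ite_false, Prod.mk.injEq, and_true]
      omega
    · simp only [hki, ite_false, show i < k + 1 by omega, ite_true, Prod.mk.injEq, true_and]
      omega

namespace PTree

theorem iesubList_append (xs ys : List PTree) :
    iesubList (xs ++ ys) = iesubList xs + iesubList ys := by
  induction xs with
  | nil => simp [iesubList]
  | cons t ts ih => simp [iesubList, ih, Nat.add_assoc]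

mutual
theorem iesubList_csub {i : ℕ} {t : PTree} (h : i < iesub t) :
    iesubList (csub i t) = iesub t - 1 := by
  match t with
  | .node cs =>
    rw [iesub] at h ⊢
    by_cases hi : i = 0
    · simp [csub, hi]
    · simp only [csub, hi, ite_false, iesubList, iesub,
        iesubList_clist (i := i - 1) (cs := cs) (by omega)]
      omega
theorem iesubList_clist {i : ℕ} {cs : List PTree} (h : i < iesubList cs) :
    iesubList (clist i cs) = iesubList cs - 1 := by
  match cs with
  | t :: ts =>
    rw [iesubList] at h ⊢
    by_cases hi : i < iesub t
    · simp only [clist, hi, ite_true, iesubList_append, iesubList_csub hi]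
      omega
    · simp only [clist, hi, ite_false, iesubList,
        iesubList_clist (i := i - iesub t) (cs := ts) (by omega)]
      omega
end

theorem clist_append_of_lt {i : ℕ} {xs : List PTree} (ys : List PTree)
    (h : i < iesubList xs) : clist i (xs ++ ys) = clist i xs ++ ys := by
  induction xs generalizing i with
  | nil => simp [iesubList] at h
  | cons t ts ih =>
    rw [iesubList] at h
    by_cases hi : i < iesub t
    · simp [clist, hi]
    · simp [clist, hi, ih (i := i - iesub t) (by omega)]

theorem clist_append_of_le {i : ℕ} {xs : List PTree} (ys : List PTree)
    (h : iesubList xs ≤ i) : clist i (xs ++ ys) = xs ++ clist (i - iesubList xs) ys := by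
  induction xs generalizing i with
  | nil => simp [iesubList]
  | cons t ts ih =>
    rw [iesubList] at h
    simp only [List.cons_append, clist, show ¬ i < iesub t by omega, ite_false, iesubList,
      ih (i := i - iesub t) (by omega), Nat.sub_sub]

theorem iesub_node_clist {i : ℕ} {cs : List PTree} (h : i < iesubList cs) :
    iesub (node (clist i cs)) = iesubList cs := by
  rw [iesub, iesubList_clist h]
  omega

mutual
theorem clist_csub_comm {i j : ℕ} {t : PTree} (hij : i < j) (hj : j < iesub t) :
    clist i (csub j t) = clist (j - 1) (csub i t) := by
  match t with
  | .node cs =>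
    rw [iesub] at hj
    have hj' : iesub (node (clist (j - 1) cs)) = iesubList cs :=
      iesub_node_clist (i := j - 1) (cs := cs) (by omega)
    by_cases hi : i = 0
    · subst hi
      simp [csub, show j ≠ 0 by omega, clist, hj', show 0 < iesubList cs by omega]
    · have hi' : iesub (node (clist (i - 1) cs)) = iesubList cs :=
        iesub_node_clist (i := i - 1) (cs := cs) (by omega)
      simp only [csub, show j ≠ 0 by omega, hi, ite_false, clist, hj', hi',
        show i < iesubList cs by omega, show j - 1 < iesubList cs by omega, ite_true,
        List.append_nil, show j - 1 ≠ 0 by omega,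
        clist_comm (i := i - 1) (j := j - 1) (cs := cs) (by omega)]
theorem clist_comm {i j : ℕ} {cs : List PTree} (hij : i < j) :
    clist i (clist j cs) = clist (j - 1) (clist i cs) := by
  match cs with
  | [] => rfl
  | t :: ts =>
    by_cases hj : j < iesub t
    · have hi : i < iesub t := by omega
      simp only [clist, hj, hi, ite_true]
      rw [clist_append_of_lt ts (by rw [iesubList_csub hj]; omega),
        clist_append_of_lt ts (by rw [iesubList_csub hi]; omega), clist_csub_comm hij hj]
    · by_cases hi : i < iesub t
      · simp only [clist, hj, hi, ite_true, ite_false]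
        rw [clist_append_of_le ts (by rw [iesubList_csub hi]; omega), iesubList_csub hi,
          show j - 1 - (iesub t - 1) = j - iesub t by omega]
      · simp only [clist, hj, hi, show ¬ j - 1 < iesub t by omega, ite_false,
          clist_comm (i := i - iesub t) (j := j - iesub t) (cs := ts) (by omega),
          show j - iesub t - 1 = j - 1 - iesub t by omega]
end

theorem iEdges_contract {T : PTree} {i : ℕ} (h : i < iEdges T) :
    iEdges (contract T i) = iEdges T - 1 := by
  match T with
  | .node _ => exact iesubList_clist h

theorem contract_contract_of_lt (T : PTree) {i j : ℕ} (hij : i < j) :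
    contract (contract T j) i = contract (contract T i) (j - 1) := by
  match T with
  | .leaf => rfl
  | .node _ => exact congrArg node (clist_comm hij)

end PTree

/-- `∂_K ∘ ∂_K = 0` on the oriented cellular chains of the associahedra. -/
theorem bndK_bndK (f : KChains) : bndK (bndK f) = 0 := by
  funext T
  calc bndK (bndK f) T
      = ∑ i ∈ range T.iEdges, ∑ k ∈ range (T.iEdges - 1),
          (-1 : ℤ) ^ (i + k) • f ((T.contract i).contract k) := by
        refine sum_congr rfl fun i hi => ?_
        simp only [bndK]
        rw [PTree.iEdges_contract (mem_range.mp hi), mul_sum]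
        exact sum_congr rfl fun k _ => by rw [smul_eq_mul, pow_add, mul_assoc]
    _ = 0 := sum_range_alternating_double_eq_zero _ fun i j hij _ => by
        rw [T.contract_contract_of_lt hij]
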